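/- arXiv:1207.6614 — 4 statements merged into one kernel-verified Lean document; each statement's English description precedes it below -/
import Mathlib

section
/- Let $f_0$ be a probability density on $[0,\infty)$ with CDF $F_0$, and $\hat f_0$ the left derivative of the least concave majorant $\widehat F_0$ of $F_0$. Then for every increasing function $h$ on $[0,\infty)$ for which both integrals exist, $\int_0^\infty h(x)\,\hat f_0(x)\,dx \le \int_0^\infty h(x)\, f_0(x)\,dx$. -/
/-!
The left derivative `fhat` of the concave majorant is a nonnegative density whose tails satisfy
`∫_{(c,∞)} fhat = 1 - Fhat c ≤ 1 - F0 c = ∫_{(c,∞)} f0`, with equality at `c = 0` because the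
least concave majorant of a continuous `F0` is continuous at `0` with `Fhat 0 = F0 0 = 0`.
So `fhat` is stochastically smaller than `f0`, and by the layer-cake formula every increasing
function has a smaller mean under `fhat`. The tail identity is the fundamental theorem of calculus
for a one-sided derivative, reduced to the right-derivative version by the reflection `x ↦ -x`.
-/

open Set MeasureTheory Filter Topology

theorem HasDerivWithinAt.neg_comp_neg_Ioi {f : ℝ → ℝ} {f' y : ℝ}
    (h : HasDerivWithinAt f f' (Iio (-y)) (-y)) :
    HasDerivWithinAt (fun x => -f (-x)) f' (Ioi y) y := by
  have h' :=
    (h.comp y (hasDerivWithinAt_neg y (Ioi y)) fun z (hz : y < z) => neg_lt_neg hz).neg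
  rwa [mul_neg_one, neg_neg] at h'

namespace intervalIntegral

variable {f f' : ℝ → ℝ} {a b : ℝ}

theorem intervalIntegrable_deriv_left_of_nonneg (hab : a ≤ b)
    (hcont : ContinuousOn f (Icc a b))
    (hderiv : ∀ x ∈ Ioo a b, HasDerivWithinAt f (f' x) (Iio x) x)
    (hf' : ∀ x ∈ Ioo a b, 0 ≤ f' x) :
    IntervalIntegrable f' volume a b := by
  have hreflected : IntegrableOn (fun x => f' (-x)) (Ioc (-b) (-a)) :=
    integrableOn_deriv_right_of_nonneg
      (hcont.comp continuous_neg.continuousOn fun y hy => ⟨le_neg.mp hy.2, neg_le.mp hy.1⟩).neg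
      (fun y hy => (hderiv (-y) ⟨lt_neg.mp hy.2, neg_lt.mp hy.1⟩).neg_comp_neg_Ioi)
      fun y hy => hf' _ ⟨lt_neg.mp hy.2, neg_lt.mp hy.1⟩
  rw [← intervalIntegrable_iff_integrableOn_Ioc_of_le (neg_le_neg hab),
    ← IntervalIntegrable.iff_comp_neg] at hreflected
  exact hreflected.symm

theorem integral_eq_sub_of_hasDeriv_left_of_nonneg (hab : a ≤ b)
    (hcont : ContinuousOn f (Icc a b))
    (hderiv : ∀ x ∈ Ioo a b, HasDerivWithinAt f (f' x) (Iio x) x)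
    (hf' : ∀ x ∈ Ioo a b, 0 ≤ f' x) :
    ∫ x in a..b, f' x = f b - f a := by
  have hreflected :=
    integral_eq_sub_of_hasDeriv_right_of_le (f := fun x => -f (-x)) (neg_le_neg hab)
    (hcont.comp continuous_neg.continuousOn fun y hy => ⟨le_neg.mp hy.2, neg_le.mp hy.1⟩).neg
    (fun y hy => (hderiv (-y) ⟨lt_neg.mp hy.2, neg_lt.mp hy.1⟩).neg_comp_neg_Ioi)
    ((IntervalIntegrable.iff_comp_neg).mp
      (intervalIntegrable_deriv_left_of_nonneg hab hcont hderiv hf').symm)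
  simp only [← integral_comp_neg, neg_neg] at hreflected
  linarith

end intervalIntegral

namespace MeasureTheory

section OneSidedFTC

variable {f f' : ℝ → ℝ} {a m : ℝ}

theorem tendsto_intervalIntegral_deriv_left_of_nonneg (hcont : ContinuousOn f (Ici a))
    (hderiv : ∀ x ∈ Ioi a, HasDerivWithinAt f (f' x) (Iio x) x)
    (hf' : ∀ x ∈ Ioi a, 0 ≤ f' x)
    (hf : Tendsto f atTop (𝓝 m)) :
    Tendsto (fun x => ∫ y in a..x, f' y) atTop (𝓝 (m - f a)) := by
  refine (hf.sub_const _).congr' ?_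
  filter_upwards [eventually_ge_atTop a] with x hx
  exact (intervalIntegral.integral_eq_sub_of_hasDeriv_left_of_nonneg hx
    (hcont.mono Icc_subset_Ici_self) (fun y hy => hderiv y hy.1) fun y hy => hf' y hy.1).symm

theorem integrableOn_Ioi_deriv_left_of_nonneg (hcont : ContinuousOn f (Ici a))
    (hderiv : ∀ x ∈ Ioi a, HasDerivWithinAt f (f' x) (Iio x) x)
    (hf' : ∀ x ∈ Ioi a, 0 ≤ f' x)
    (hf : Tendsto f atTop (𝓝 m)) :
    IntegrableOn f' (Ioi a) := by
  refine integrableOn_Ioi_of_intervalIntegral_norm_tendsto (m - f a) a (fun x => ?_) tendsto_id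
    ((tendsto_intervalIntegral_deriv_left_of_nonneg hcont hderiv hf' hf).congr' ?_)
  · rcases le_total a x with hax | hxa
    · exact (intervalIntegrable_iff_integrableOn_Ioc_of_le hax).mp <|
        intervalIntegral.intervalIntegrable_deriv_left_of_nonneg hax
          (hcont.mono Icc_subset_Ici_self) (fun y hy => hderiv y hy.1) fun y hy => hf' y hy.1
    · simp [Ioc_eq_empty_of_le hxa]
  · filter_upwards [eventually_ge_atTop a] with x hx
    refine intervalIntegral.integral_congr_ae (Eventually.of_forall fun y hy => ?_)
    rw [uIoc_of_le hx] at hy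
    exact (Real.norm_of_nonneg (hf' y hy.1)).symm

theorem integral_Ioi_of_hasDeriv_left_of_nonneg (hcont : ContinuousOn f (Ici a))
    (hderiv : ∀ x ∈ Ioi a, HasDerivWithinAt f (f' x) (Iio x) x)
    (hf' : ∀ x ∈ Ioi a, 0 ≤ f' x)
    (hf : Tendsto f atTop (𝓝 m)) :
    ∫ x in Ioi a, f' x = m - f a :=
  tendsto_nhds_unique (intervalIntegral_tendsto_integral_Ioi a
    (integrableOn_Ioi_deriv_left_of_nonneg hcont hderiv hf' hf) tendsto_id)
    (tendsto_intervalIntegral_deriv_left_of_nonneg hcont hderiv hf' hf)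

end OneSidedFTC

section StochasticOrder

variable {μ ν : Measure ℝ}

theorem measure_univ_le_of_measure_Ioi_le (h : ∀ c, μ (Ioi c) ≤ ν (Ioi c)) :
    μ univ ≤ ν univ := by
  have hunion : (⋃ n : ℕ, Ioi (-(n : ℝ))) = univ :=
    eq_univ_of_forall fun x => mem_iUnion.mpr
      (let ⟨n, hn⟩ := exists_nat_gt (-x); ⟨n, neg_lt.mp hn⟩)
  have hmono : Monotone fun n : ℕ => Ioi (-(n : ℝ)) :=
    fun m n hmn => Ioi_subset_Ioi (neg_le_neg (Nat.cast_le.mpr hmn))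
  rw [← hunion, hmono.measure_iUnion, hmono.measure_iUnion]
  exact iSup_mono fun n => h _

theorem _root_.IsUpperSet.measure_le_of_measure_Ioi_le [NullSingletonClass μ]
    (h : ∀ c, μ (Ioi c) ≤ ν (Ioi c)) {s : Set ℝ} (hs : IsUpperSet s) : μ s ≤ ν s := by
  rcases s.eq_empty_or_nonempty with rfl | hne
  · simp
  by_cases hbdd : BddBelow s
  · have hIoi : Ioi (sInf s) ⊆ s := fun x hx =>
      let ⟨y, hys, hyx⟩ := (csInf_lt_iff hbdd hne).mp hx
      hs hyx.le hys
    calc μ s ≤ μ (Ici (sInf s)) := measure_mono fun x hx => csInf_le hbdd hx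
      _ = μ (Ioi (sInf s)) := measure_congr Ioi_ae_eq_Ici.symm
      _ ≤ ν (Ioi (sInf s)) := h _
      _ ≤ ν s := measure_mono hIoi
  · have huniv : s = univ := eq_univ_of_forall fun x =>
      let ⟨y, hys, hyx⟩ := not_bddBelow_iff.mp hbdd x
      hs hyx.le hys
    rw [huniv]
    exact measure_univ_le_of_measure_Ioi_le h

end StochasticOrder

theorem lintegral_ofReal_le_of_monotone {α : Type*} [MeasurableSpace α] [Preorder α]
    {μ ν : Measure α} (h : ∀ s, IsUpperSet s → μ s ≤ ν s) {g : α → ℝ} (hg : Monotone g)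
    (hg0 : 0 ≤ g) (hgμ : AEMeasurable g μ) (hgν : AEMeasurable g ν) :
    ∫⁻ x, ENNReal.ofReal (g x) ∂μ ≤ ∫⁻ x, ENNReal.ofReal (g x) ∂ν := by
  rw [lintegral_eq_lintegral_meas_lt μ (Eventually.of_forall hg0) hgμ,
    lintegral_eq_lintegral_meas_lt ν (Eventually.of_forall hg0) hgν]
  exact lintegral_mono fun t => h _ fun x y hxy hx => lt_of_lt_of_le hx (hg hxy)

theorem lintegral_ofReal_withDensity_ofReal {α : Type*} [MeasurableSpace α] {μ : Measure α}
    {p g : α → ℝ} (hp : 0 ≤ᵐ[μ] p) (hpm : AEMeasurable p μ) (hg : 0 ≤ᵐ[μ] g)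
    (hgm : AEMeasurable g μ) (hpg : Integrable (fun x => p x * g x) μ) :
    ∫⁻ x, ENNReal.ofReal (g x) ∂μ.withDensity (fun x => ENNReal.ofReal (p x)) =
      ENNReal.ofReal (∫ x, p x * g x ∂μ) := by
  rw [lintegral_withDensity_eq_lintegral_mul₀ hpm.ennreal_ofReal hgm.ennreal_ofReal,
    ofReal_integral_eq_lintegral_ofReal hpg
      (by filter_upwards [hp, hg] with x hpx hgx using mul_nonneg hpx hgx)]
  refine lintegral_congr_ae ?_
  filter_upwards [hp] with x hpx
  exact (ENNReal.ofReal_mul hpx).symm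

theorem withDensity_ofReal_restrict_Ioi_apply_Ioi {μ : Measure ℝ} {p : ℝ → ℝ} {a : ℝ}
    (hp : ∀ x ∈ Ioi a, 0 ≤ p x) (hpi : IntegrableOn p (Ioi a) μ) (c : ℝ) :
    (μ.restrict (Ioi a)).withDensity (fun x => ENNReal.ofReal (p x)) (Ioi c) =
      ENNReal.ofReal (∫ x in Ioi (max c a), p x ∂μ) := by
  have hsub : Ioi (max c a) ⊆ Ioi a := Ioi_subset_Ioi (le_max_right c a)
  rw [withDensity_apply _ measurableSet_Ioi, Measure.restrict_restrict measurableSet_Ioi,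
    Ioi_inter_Ioi, ofReal_integral_eq_lintegral_ofReal (hpi.mono_set hsub)
      (ae_restrict_of_forall_mem measurableSet_Ioi fun x hx => hp x (hsub hx))]

theorem setIntegral_Ioi_mul_le_of_monotone {p q g : ℝ → ℝ} {a : ℝ}
    (hp : ∀ x ∈ Ioi a, 0 ≤ p x) (hq : ∀ x ∈ Ioi a, 0 ≤ q x)
    (hpi : IntegrableOn p (Ioi a)) (hqi : IntegrableOn q (Ioi a))
    (htail : ∀ c ≥ a, ∫ x in Ioi c, p x ≤ ∫ x in Ioi c, q x) (hg : Monotone g) (hg0 : 0 ≤ g)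
    (hpg : IntegrableOn (fun x => p x * g x) (Ioi a))
    (hqg : IntegrableOn (fun x => q x * g x) (Ioi a)) :
    ∫ x in Ioi a, p x * g x ≤ ∫ x in Ioi a, q x * g x := by
  have hle := lintegral_ofReal_le_of_monotone
    (μ := (volume.restrict (Ioi a)).withDensity fun x => ENNReal.ofReal (p x))
    (ν := (volume.restrict (Ioi a)).withDensity fun x => ENNReal.ofReal (q x))
    (fun s hs => hs.measure_le_of_measure_Ioi_le fun c => by
      rw [withDensity_ofReal_restrict_Ioi_apply_Ioi hp hpi,
        withDensity_ofReal_restrict_Ioi_apply_Ioi hq hqi]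
      exact ENNReal.ofReal_le_ofReal (htail _ (le_max_right c a)))
    hg hg0 hg.measurable.aemeasurable hg.measurable.aemeasurable
  rwa [lintegral_ofReal_withDensity_ofReal (ae_restrict_of_forall_mem measurableSet_Ioi hp)
      hpi.aemeasurable (Eventually.of_forall hg0) hg.measurable.aemeasurable hpg,
    lintegral_ofReal_withDensity_ofReal (ae_restrict_of_forall_mem measurableSet_Ioi hq)
      hqi.aemeasurable (Eventually.of_forall hg0) hg.measurable.aemeasurable hqg,
    ENNReal.ofReal_le_ofReal_iff
      (setIntegral_nonneg measurableSet_Ioi fun x hx => mul_nonneg (hq x hx) (hg0 x))]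
    at hle

theorem setIntegral_Ioi_mul_le_of_monotoneOn {p q h : ℝ → ℝ} {a : ℝ}
    (hp : ∀ x ∈ Ioi a, 0 ≤ p x) (hq : ∀ x ∈ Ioi a, 0 ≤ q x)
    (hpi : IntegrableOn p (Ioi a)) (hqi : IntegrableOn q (Ioi a))
    (htail : ∀ c ≥ a, ∫ x in Ioi c, p x ≤ ∫ x in Ioi c, q x)
    (hmass : ∫ x in Ioi a, p x = ∫ x in Ioi a, q x) (hh : MonotoneOn h (Ici a))
    (hhp : IntegrableOn (fun x => h x * p x) (Ioi a))
    (hhq : IntegrableOn (fun x => h x * q x) (Ioi a)) :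
    ∫ x in Ioi a, h x * p x ≤ ∫ x in Ioi a, h x * q x := by
  set g : ℝ → ℝ := fun x => h (max x a) - h a
  have hg : Monotone g := fun x y hxy =>
    sub_le_sub_right (hh (le_max_right x a) (le_max_right y a) (max_le_max hxy le_rfl)) _
  have hg0 : 0 ≤ g := fun x =>
    sub_nonneg.mpr (hh self_mem_Ici (le_max_right x a) (le_max_right x a))
  have hdecomp : ∀ r : ℝ → ℝ, IntegrableOn r (Ioi a) →
      IntegrableOn (fun x => h x * r x) (Ioi a) →
      IntegrableOn (fun x => r x * g x) (Ioi a) ∧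
        ∫ x in Ioi a, h x * r x = (∫ x in Ioi a, r x * g x) + h a * ∫ x in Ioi a, r x := by
    intro r hri hhr
    have hrg : EqOn (fun x => r x * g x) (fun x => h x * r x - h a * r x) (Ioi a) :=
      fun x hx => by simp only [g, max_eq_left (le_of_lt (mem_Ioi.mp hx))]; ring
    refine ⟨(hhr.sub (hri.const_mul (h a))).congr_fun hrg.symm measurableSet_Ioi, ?_⟩
    rw [show ∫ x in Ioi a, r x * g x = ∫ x in Ioi a, (h x * r x - h a * r x) from
      setIntegral_congr_fun measurableSet_Ioi hrg, integral_sub hhr (hri.const_mul _),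
      integral_const_mul, sub_add_cancel]
  obtain ⟨hpg, hIp⟩ := hdecomp p hpi hhp
  obtain ⟨hqg, hIq⟩ := hdecomp q hqi hhq
  rw [hIp, hIq, hmass]
  exact add_le_add_left
    (setIntegral_Ioi_mul_le_of_monotone hp hq hpi hqi htail hg hg0 hpg hqg) _

end MeasureTheory

section Primitive

variable {f F : ℝ → ℝ} {a : ℝ}

theorem setIntegral_Ioi_eq_sub_of_eq_primitive (hf : IntegrableOn f (Ioi a))
    (hF : ∀ x ≥ a, F x = ∫ u in a..x, f u) {c : ℝ} (hc : a ≤ c) :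
    ∫ x in Ioi c, f x = (∫ x in Ioi a, f x) - F c := by
  rw [hF c hc, ← intervalIntegral.integral_Ioi_sub_Ioi hf hc, sub_sub_cancel]

theorem continuousWithinAt_Ici_of_eq_primitive (hf : IntegrableOn f (Ioi a))
    (hF : ∀ x ≥ a, F x = ∫ u in a..x, f u) : ContinuousWithinAt F (Ici a) a := by
  have hint : IntervalIntegrable f volume a (a + 1) :=
    (intervalIntegrable_iff_integrableOn_Ioc_of_le (le_add_of_nonneg_right zero_le_one)).mpr
      (hf.mono_set Ioc_subset_Ioi_self)
  have hprim : ContinuousWithinAt (fun x => ∫ u in a..x, f u) (Ici a) a := by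
    have := intervalIntegral.continuousWithinAt_primitive (a := a) (b₀ := a) (b₁ := a)
      (b₂ := a + 1) Real.volume_singleton (by simpa using hint)
    rwa [ContinuousWithinAt, nhdsWithin_Icc_eq_nhdsGE (lt_add_one a)] at this
  exact hprim.congr (fun x hx => hF x hx) (hF a le_rfl)

theorem tendsto_atTop_of_eq_primitive (hf : IntegrableOn f (Ioi a))
    (hF : ∀ x ≥ a, F x = ∫ u in a..x, f u) : Tendsto F atTop (𝓝 (∫ x in Ioi a, f x)) :=
  (intervalIntegral_tendsto_integral_Ioi a hf tendsto_id).congr'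
    ((eventually_ge_atTop a).mono fun x hx => (hF x hx).symm)

end Primitive

namespace ConcaveOn

variable {S : Set ℝ} {f : ℝ → ℝ} {f' x y : ℝ}

theorem slope_le_of_hasDerivWithinAt_Iio_of_mem_interior (hf : ConcaveOn ℝ S f)
    (hx : x ∈ interior S) (hy : y ∈ S) (hxy : x < y) (hf' : HasDerivWithinAt f f' (Iio x) x) :
    slope f x y ≤ f' := by
  have hleft : derivWithin (-f) (Iio x) x = -f' :=
    hf'.neg.derivWithin (uniqueDiffWithinAt_Iio x)
  have := (hf.neg.leftDeriv_le_rightDeriv_of_mem_interior hx).trans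
    (hf.neg.rightDeriv_le_slope_of_mem_interior hx hy hxy)
  rw [hleft, slope_neg_fun, Pi.neg_apply, Pi.neg_apply] at this
  linarith

theorem nonneg_of_hasDerivWithinAt_Iio {a m : ℝ} (hf : ConcaveOn ℝ (Ici a) f)
    (hm : ∀ y ∈ Ici a, m ≤ f y) (hx : a < x) (hf' : HasDerivWithinAt f f' (Iio x) x) :
    0 ≤ f' := by
  by_contra! hneg
  -- far enough to the right for the chord bound `f y ≤ f x + f' * (y - x)` to force `f y < m`
  set y := x + (f x - m + 1) / -f'
  have hxy : x < y := lt_add_of_pos_right x (div_pos (by linarith [hm x hx.le]) (by linarith))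
  have hslope := hf.slope_le_of_hasDerivWithinAt_Iio_of_mem_interior
    (by rwa [interior_Ici]) (hx.trans hxy).le hxy hf'
  rw [slope_def_field, div_le_iff₀ (by linarith)] at hslope
  have hyx : f' * (y - x) = -(f x - m + 1) := by
    simp only [y, add_sub_cancel_left]; field_simp [hneg.ne]
  linarith [hm y (hx.trans hxy).le]

end ConcaveOn

def IsLeastConcaveMajorantOn (s : Set ℝ) (F G : ℝ → ℝ) : Prop :=
  ConcaveOn ℝ s G ∧ (∀ x ∈ s, F x ≤ G x) ∧
    ∀ H : ℝ → ℝ, ConcaveOn ℝ s H → (∀ x ∈ s, F x ≤ H x) → ∀ x ∈ s, G x ≤ H x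

theorem concaveOn_affine {s : Set ℝ} (hs : Convex ℝ s) (c k a : ℝ) :
    ConcaveOn ℝ s fun x => c + k * (x - a) :=
  ⟨hs, fun x _ y _ u v _ _ huv => le_of_eq <| by
    simp only [smul_eq_mul]; linear_combination (c - k * a) * huv⟩

theorem exists_affine_majorant_of_continuousWithinAt {F : ℝ → ℝ} {a M ε : ℝ}
    (hF : ContinuousWithinAt F (Ici a) a) (hM : ∀ x ∈ Ici a, F x ≤ M) (hε : 0 < ε) :
    ∃ k, ∀ x ∈ Ici a, F x ≤ F a + ε + k * (x - a) := by
  obtain ⟨u, hau, hu⟩ := mem_nhdsGE_iff_exists_Ico_subset.mp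
    (hF.eventually (eventually_lt_nhds (lt_add_of_pos_right (F a) hε)))
  have hua : 0 < u - a := sub_pos.mpr hau
  -- the line reaches `M` at `u`, beyond which continuity no longer controls `F`
  refine ⟨(M - F a) / (u - a), fun x hx => ?_⟩
  have hk : 0 ≤ (M - F a) / (u - a) := div_nonneg (sub_nonneg.mpr (hM a self_mem_Ici)) hua.le
  rcases lt_or_ge x u with hxu | hux
  · have hFx : F x < F a + ε := hu ⟨hx, hxu⟩
    have : 0 ≤ (M - F a) / (u - a) * (x - a) := mul_nonneg hk (sub_nonneg.mpr hx)
    linarith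
  · have : M - F a ≤ (M - F a) / (u - a) * (x - a) := by
      rw [div_mul_eq_mul_div, le_div_iff₀ hua]
      exact mul_le_mul_of_nonneg_left (by linarith) (sub_nonneg.mpr (hM a self_mem_Ici))
    linarith [hM x hx]

namespace IsLeastConcaveMajorantOn

variable {F G : ℝ → ℝ} {a M : ℝ}

theorem exists_le_affine (hG : IsLeastConcaveMajorantOn (Ici a) F G)
    (hF : ContinuousWithinAt F (Ici a) a) (hM : ∀ x ∈ Ici a, F x ≤ M) {ε : ℝ} (hε : 0 < ε) :
    ∃ k, ∀ x ∈ Ici a, G x ≤ F a + ε + k * (x - a) :=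
  let ⟨k, hk⟩ := exists_affine_majorant_of_continuousWithinAt hF hM hε
  ⟨k, hG.2.2 _ (concaveOn_affine (convex_Ici a) _ k a) hk⟩

theorem apply_left_eq (hG : IsLeastConcaveMajorantOn (Ici a) F G)
    (hF : ContinuousWithinAt F (Ici a) a) (hM : ∀ x ∈ Ici a, F x ≤ M) : G a = F a := by
  refine le_antisymm (le_of_forall_pos_lt_add fun ε hε => ?_) (hG.2.1 a self_mem_Ici)
  obtain ⟨k, hk⟩ := hG.exists_le_affine hF hM (half_pos hε)
  linarith [hk a self_mem_Ici]

theorem continuousWithinAt_Ici (hG : IsLeastConcaveMajorantOn (Ici a) F G)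
    (hF : ContinuousWithinAt F (Ici a) a) (hM : ∀ x ∈ Ici a, F x ≤ M) :
    ContinuousWithinAt G (Ici a) a := by
  rw [ContinuousWithinAt, hG.apply_left_eq hF hM]
  refine tendsto_order.2 ⟨fun b hb => ?_, fun b hb => ?_⟩
  · filter_upwards [hF.eventually (eventually_gt_nhds hb), self_mem_nhdsWithin] with x hx hxa
    exact hx.trans_le (hG.2.1 x hxa)
  · obtain ⟨k, hk⟩ := hG.exists_le_affine hF hM (half_pos (sub_pos.mpr hb))
    have haff : Tendsto (fun x => F a + (b - F a) / 2 + k * (x - a)) (𝓝[Ici a] a)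
        (𝓝 (F a + (b - F a) / 2 + k * (a - a))) :=
      (Continuous.tendsto (by fun_prop) a).mono_left nhdsWithin_le_nhds
    rw [sub_self, mul_zero, add_zero] at haff
    filter_upwards [haff.eventually (eventually_lt_nhds (b := b) (by linarith)),
      self_mem_nhdsWithin] with x hx hxa
    exact (hk x hxa).trans_lt hx

theorem continuousOn_Ici (hG : IsLeastConcaveMajorantOn (Ici a) F G)
    (hF : ContinuousWithinAt F (Ici a) a) (hM : ∀ x ∈ Ici a, F x ≤ M) :
    ContinuousOn G (Ici a) := by
  intro x hx
  rcases (mem_Ici.mp hx).eq_or_lt with rfl | hax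
  · exact hG.continuousWithinAt_Ici hF hM
  · have := hG.1.continuousOn_interior x (by rwa [interior_Ici])
    exact (this.continuousAt (by rw [interior_Ici]; exact Ioi_mem_nhds hax)).continuousWithinAt

theorem tendsto_atTop (hG : IsLeastConcaveMajorantOn (Ici a) F G) (hM : ∀ x ∈ Ici a, F x ≤ M)
    (hF : Tendsto F atTop (𝓝 M)) : Tendsto G atTop (𝓝 M) :=
  tendsto_of_tendsto_of_tendsto_of_le_of_le' hF tendsto_const_nhds
    (eventually_ge_atTop a |>.mono hG.2.1)
    (eventually_ge_atTop a |>.mono (hG.2.2 _ (concaveOn_const M (convex_Ici a)) hM))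

end IsLeastConcaveMajorantOn

/-- for increasing `h`, `∫ h fhat ≤ ∫ h f0`. -/
theorem grenander_KL_projection_increasing_functional
    (f0 F0 Fhat fhat : ℝ → ℝ)
    (hf0nn : ∀ x, 0 ≤ f0 x)
    (hf0int : ∫ x in Ici (0:ℝ), f0 x = 1)
    (hF0 : ∀ x ≥ (0:ℝ), F0 x = ∫ u in (0:ℝ)..x, f0 u)
    -- `Fhat` is the least concave majorant of `F0` on `[0,∞)`
    (hconc : ConcaveOn ℝ (Ici 0) Fhat)
    (hmaj : ∀ x ≥ (0:ℝ), F0 x ≤ Fhat x)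
    (hleast : ∀ G : ℝ → ℝ, ConcaveOn ℝ (Ici 0) G → (∀ x ≥ (0:ℝ), F0 x ≤ G x) →
      ∀ x ≥ (0:ℝ), Fhat x ≤ G x)
    -- `fhat` is the left derivative of `Fhat`
    (hderiv : ∀ x > (0:ℝ), HasDerivWithinAt Fhat (fhat x) (Iio x) x) :
    ∀ h : ℝ → ℝ, MonotoneOn h (Ici 0) →
      IntegrableOn (fun x => h x * fhat x) (Ici 0) →
      IntegrableOn (fun x => h x * f0 x) (Ici 0) →
      ∫ x in Ici (0:ℝ), h x * fhat x ≤ ∫ x in Ici (0:ℝ), h x * f0 x := by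
  intro h hh hhfhat hhf0
  rw [integral_Ici_eq_integral_Ioi] at hf0int
  have hf0i : IntegrableOn f0 (Ioi 0) := .of_integral_ne_zero (hf0int ▸ one_ne_zero)
  have hF0tail : ∀ c ≥ (0:ℝ), ∫ x in Ioi c, f0 x = 1 - F0 c := fun c hc =>
    hf0int ▸ setIntegral_Ioi_eq_sub_of_eq_primitive hf0i hF0 hc
  have hF0le : ∀ x ∈ Ici (0:ℝ), F0 x ≤ 1 := fun x hx => sub_nonneg.mp <|
    hF0tail x hx ▸ setIntegral_nonneg measurableSet_Ioi fun y _ => hf0nn y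
  have hF0cont := continuousWithinAt_Ici_of_eq_primitive hf0i hF0
  have hG : IsLeastConcaveMajorantOn (Ici 0) F0 Fhat := ⟨hconc, hmaj, hleast⟩
  have hGcont := hG.continuousOn_Ici hF0cont hF0le
  have hGtop := hG.tendsto_atTop hF0le (hf0int ▸ tendsto_atTop_of_eq_primitive hf0i hF0)
  have hfhat_nn : ∀ x ∈ Ioi (0:ℝ), 0 ≤ fhat x := fun x hx =>
    hconc.nonneg_of_hasDerivWithinAt_Iio (fun y hy => (hF0 y hy ▸
      intervalIntegral.integral_nonneg hy fun u _ => hf0nn u).trans (hmaj y hy)) hx (hderiv x hx)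
  have hfhat_tail : ∀ c ≥ (0:ℝ), ∫ x in Ioi c, fhat x = 1 - Fhat c := fun c hc =>
    integral_Ioi_of_hasDeriv_left_of_nonneg (hGcont.mono (Ici_subset_Ici.mpr hc))
      (fun x hx => hderiv x (hc.trans_lt hx)) (fun x hx => hfhat_nn x (hc.trans_lt hx)) hGtop
  rw [integral_Ici_eq_integral_Ioi, integral_Ici_eq_integral_Ioi]
  refine setIntegral_Ioi_mul_le_of_monotoneOn hfhat_nn (fun x _ => hf0nn x)
    (integrableOn_Ioi_deriv_left_of_nonneg hGcont hderiv hfhat_nn hGtop) hf0i (fun c hc => ?_)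
    ?_ hh (hhfhat.mono_set Ioi_subset_Ici_self) (hhf0.mono_set Ioi_subset_Ici_self)
  · rw [hfhat_tail c hc, hF0tail c hc]
    linarith [hmaj c hc]
  · rw [hfhat_tail 0 le_rfl, hF0tail 0 le_rfl, hG.apply_left_eq hF0cont hF0le]
end

section
/- (Marshall's lemma) Let $F_0$ be a continuous CDF on $[0,\infty)$ with least concave majorant $\widehat F_0$. Then for any concave CDF $G_0$ on $[0,\infty)$ (i.e., the CDF of a decreasing density), $\sup_{x\ge 0}|\widehat F_0(x) - G_0(x)| \le \sup_{x\ge 0}|F_0(x) - G_0(x)|$. -/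
/-!
`G0 + C` is concave and, by hypothesis, lies above `F0`; hence it lies above the least concave
majorant `F̂0`. On the other side `F̂0 ≥ F0 ≥ G0 - C`. Concavity of `G0` comes from comparing its
difference quotients with the value of the antitone density at the middle point.
-/

open Set MeasureTheory

section Primitive

variable {D : Set ℝ} {g : ℝ → ℝ}

theorem AntitoneOn.intervalIntegrable_of_convex (hD : Convex ℝ D) (hg : AntitoneOn g D)
    {x y : ℝ} (hx : x ∈ D) (hy : y ∈ D) : IntervalIntegrable g volume x y :=
  (hg.mono (hD.ordConnected.uIcc_subset hx hy)).intervalIntegrable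

theorem AntitoneOn.mul_le_intervalIntegral (hD : Convex ℝ D) (hg : AntitoneOn g D)
    {x y : ℝ} (hx : x ∈ D) (hy : y ∈ D) (hxy : x ≤ y) :
    (y - x) * g y ≤ ∫ t in x..y, g t := by
  have hsub : Icc x y ⊆ D := hD.ordConnected.out hx hy
  simpa using intervalIntegral.integral_mono_on hxy intervalIntegrable_const
    (hg.intervalIntegrable_of_convex hD hx hy) fun t ht => hg (hsub ht) hy ht.2

theorem AntitoneOn.intervalIntegral_le_mul (hD : Convex ℝ D) (hg : AntitoneOn g D)
    {x y : ℝ} (hx : x ∈ D) (hy : y ∈ D) (hxy : x ≤ y) :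
    ∫ t in x..y, g t ≤ (y - x) * g x := by
  have hsub : Icc x y ⊆ D := hD.ordConnected.out hx hy
  simpa using intervalIntegral.integral_mono_on hxy
    (hg.intervalIntegrable_of_convex hD hx hy) intervalIntegrable_const
    fun t ht => hg hx (hsub ht) ht.1

theorem AntitoneOn.concaveOn_intervalIntegral (hD : Convex ℝ D) (hg : AntitoneOn g D)
    {a : ℝ} (ha : a ∈ D) : ConcaveOn ℝ D fun y => ∫ t in a..y, g t := by
  refine concaveOn_of_slope_anti_adjacent hD fun {x y z} hx hz hxy hyz => ?_
  have hy : y ∈ D := hD.ordConnected.out hx hz ⟨hxy.le, hyz.le⟩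
  have hint := fun {u v} (hu : u ∈ D) (hv : v ∈ D) => hg.intervalIntegrable_of_convex hD hu hv
  rw [intervalIntegral.integral_interval_sub_left (hint ha hy) (hint ha hx),
    intervalIntegral.integral_interval_sub_left (hint ha hz) (hint ha hy)]
  calc (∫ t in y..z, g t) / (z - y) ≤ g y :=
        (div_le_iff₀' (sub_pos.2 hyz)).2 (hg.intervalIntegral_le_mul hD hy hz hyz.le)
    _ ≤ (∫ t in x..y, g t) / (y - x) :=
        (le_div_iff₀' (sub_pos.2 hxy)).2 (hg.mul_le_intervalIntegral hD hx hy hxy.le)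

end Primitive

theorem abs_sub_le_of_isLeastConcaveMajorant {𝕜 E : Type*} [Semiring 𝕜] [PartialOrder 𝕜]
    [AddCommMonoid E] [SMul 𝕜 E] [Module 𝕜 ℝ] {s : Set E} {F Fhat G : E → ℝ} {C : ℝ}
    (hmaj : ∀ x ∈ s, F x ≤ Fhat x)
    (hleast : ∀ H : E → ℝ, ConcaveOn 𝕜 s H → (∀ x ∈ s, F x ≤ H x) → ∀ x ∈ s, Fhat x ≤ H x)
    (hG : ConcaveOn 𝕜 s G) (hC : ∀ x ∈ s, |F x - G x| ≤ C) {x : E} (hx : x ∈ s) :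
    |Fhat x - G x| ≤ C := by
  have hupper : Fhat x ≤ G x + C :=
    hleast (G + fun _ => C) (hG.add_const C)
      (fun y hy => show F y ≤ G y + C by linarith [(abs_le.1 (hC y hy)).2]) x hx
  have hlower : G x - C ≤ Fhat x := by linarith [hmaj x hx, (abs_le.1 (hC x hx)).1]
  exact abs_le.2 ⟨by linarith, by linarith⟩

theorem marshall_lemma_general
    (F0 Fhat G0 g0 : ℝ → ℝ)
    -- `Fhat` is the least concave majorant of `F0` on `[0,∞)`
    (hmaj : ∀ x ≥ (0:ℝ), F0 x ≤ Fhat x)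
    (hleast : ∀ G : ℝ → ℝ, ConcaveOn ℝ (Ici 0) G → (∀ x ≥ (0:ℝ), F0 x ≤ G x) →
      ∀ x ≥ (0:ℝ), Fhat x ≤ G x)
    -- `G0` is the CDF of a nonincreasing density `g0`
    (hg0 : AntitoneOn g0 (Ici 0))
    (hG0 : ∀ x ≥ (0:ℝ), G0 x = ∫ t in (0:ℝ)..x, g0 t) :
    ∀ C : ℝ, (∀ x ≥ (0:ℝ), |F0 x - G0 x| ≤ C) → ∀ x ≥ (0:ℝ), |Fhat x - G0 x| ≤ C := by
  intro C hC x hx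
  have hG0conc : ConcaveOn ℝ (Ici 0) G0 :=
    (hg0.concaveOn_intervalIntegral (convex_Ici 0) self_mem_Ici).congr
      fun y hy => (hG0 y hy).symm
  exact abs_sub_le_of_isLeastConcaveMajorant hmaj hleast hG0conc hC hx

/-- Marshall's lemma. -/
theorem marshall_lemma
    (F0 Fhat G0 g0 : ℝ → ℝ)
    (hF0cont : Continuous F0)
    -- `Fhat` is the least concave majorant of `F0` on `[0,∞)`
    (hconc : ConcaveOn ℝ (Ici 0) Fhat)
    (hmaj : ∀ x ≥ (0:ℝ), F0 x ≤ Fhat x)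
    (hleast : ∀ G : ℝ → ℝ, ConcaveOn ℝ (Ici 0) G → (∀ x ≥ (0:ℝ), F0 x ≤ G x) →
      ∀ x ≥ (0:ℝ), Fhat x ≤ G x)
    -- `G0` is the CDF of a nonincreasing density `g0`
    (hg0 : AntitoneOn g0 (Ici 0)) (hg0nn : ∀ x, 0 ≤ g0 x)
    (hg0int : ∫ x in Ici (0:ℝ), g0 x = 1)
    (hG0 : ∀ x ≥ (0:ℝ), G0 x = ∫ t in (0:ℝ)..x, g0 t) :
    ∀ C : ℝ, (∀ x ≥ (0:ℝ), |F0 x - G0 x| ≤ C) → ∀ x ≥ (0:ℝ), |Fhat x - G0 x| ≤ C :=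
  marshall_lemma_general F0 Fhat G0 g0 hmaj hleast hg0 hG0
end

section
/- Let $\mathbb{F}_n$ be the empirical CDF of $n$ points in $[0,\infty)$ and let $\widehat F_n$ be its least concave majorant, with left derivative $\hat f_n$ (the Grenander estimator). Then for any function $\varphi : \mathbb{R} \to \mathbb{R}$, $\int_0^\infty \varphi(\hat f_n(x))\, d(\widehat F_n - \mathbb{F}_n)(x) = 0$. -/
open Set MeasureTheory

/-!
On each cell `(τᵢ, τᵢ₊₁]` the integrand `φ ∘ f̂ₙ` is constant, so against any Stieltjes
measure `dS` the integral is the finite sum `∑ᵢ (S τᵢ₊₁ - S τᵢ) φ (f̂ₙ τᵢ₊₁)`. The sums for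
`F̂ₙ` and `𝔽ₙ` coincide because the two functions agree at the touch points `τᵢ`.
-/

section PiecewiseConstant

variable {E : Type*} [NormedAddCommGroup E] (μ : Measure ℝ) {g : ℝ → E} {a b : ℝ} {c : E}

theorem intervalIntegrable_of_forall_Ioc_eq [IsLocallyFiniteMeasure μ] (hab : a ≤ b)
    (hg : ∀ x ∈ Ioc a b, g x = c) : IntervalIntegrable g μ a b :=
  (intervalIntegrable_iff_integrableOn_Ioc_of_le hab).2 <|
    (integrableOn_const measure_Ioc_lt_top.ne).congr_fun (fun x hx => (hg x hx).symm)
      measurableSet_Ioc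

variable [NormedSpace ℝ E] [CompleteSpace E]

theorem intervalIntegral_eq_measureReal_smul_of_forall_Ioc_eq (hab : a ≤ b)
    (hg : ∀ x ∈ Ioc a b, g x = c) : ∫ x in a..b, g x ∂μ = μ.real (Ioc a b) • c := by
  rw [intervalIntegral.integral_of_le hab, setIntegral_congr_fun measurableSet_Ioc hg,
    setIntegral_const]

theorem setIntegral_Ioc_eq_sum_of_forall_Ioc_eq [IsLocallyFiniteMeasure μ] {a : ℕ → ℝ}
    (ha : Monotone a) {m : ℕ}
    (hg : ∀ k < m, ∀ x ∈ Ioc (a k) (a (k + 1)), g x = g (a (k + 1))) :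
    ∫ x in Ioc (a 0) (a m), g x ∂μ =
      ∑ k ∈ Finset.range m, μ.real (Ioc (a k) (a (k + 1))) • g (a (k + 1)) := by
  rw [← intervalIntegral.integral_of_le (ha m.zero_le),
    ← intervalIntegral.sum_integral_adjacent_intervals fun k hk =>
      intervalIntegrable_of_forall_Ioc_eq μ (ha k.le_succ) (hg k hk)]
  exact Finset.sum_congr rfl fun k hk =>
    intervalIntegral_eq_measureReal_smul_of_forall_Ioc_eq μ (ha k.le_succ)
      (hg k (Finset.mem_range.1 hk))

end PiecewiseConstant

theorem StieltjesFunction.setIntegral_Ioc_eq_sum_of_forall_Ioc_eq {E : Type*}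
    [NormedAddCommGroup E] [NormedSpace ℝ E] [CompleteSpace E] (S : StieltjesFunction ℝ)
    {g : ℝ → E} {m : ℕ} {τ : Fin (m + 1) → ℝ} (hτ : Monotone τ)
    (hg : ∀ i : Fin m, ∀ x ∈ Ioc (τ i.castSucc) (τ i.succ), g x = g (τ i.succ)) :
    ∫ x in Ioc (τ 0) (τ (Fin.last m)), g x ∂S.measure =
      ∑ i : Fin m, (S (τ i.succ) - S (τ i.castSucc)) • g (τ i.succ) := by
  set a : ℕ → ℝ := fun k => τ (Fin.clamp k m)
  have ha : ∀ i : Fin m, a i = τ i.castSucc ∧ a (i + 1) = τ i.succ := fun i =>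
    ⟨congrArg τ (Fin.ext (min_eq_left i.is_lt.le)),
      congrArg τ (Fin.ext (min_eq_left i.is_lt))⟩
  have ha_mono : Monotone a := hτ.comp Fin.clamp_monotone
  have hsum := _root_.setIntegral_Ioc_eq_sum_of_forall_Ioc_eq S.measure ha_mono
    (g := g) (m := m) fun k hk => by
      simpa only [(ha ⟨k, hk⟩).1, (ha ⟨k, hk⟩).2] using hg ⟨k, hk⟩
  have hlast : a m = τ (Fin.last m) := congrArg τ (Fin.clamp_eq_last m m le_rfl)
  have hfirst : a 0 = τ 0 := congrArg τ (Fin.ext (Nat.zero_min m))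
  rw [← hfirst, ← hlast, hsum, ← Fin.sum_univ_eq_sum_range]
  refine Finset.sum_congr rfl fun i _ => ?_
  rw [(ha i).1, (ha i).2, measureReal_def, S.measure_Ioc,
    ENNReal.toReal_ofReal (sub_nonneg.2 (S.mono (hτ (Fin.castSucc_le_succ i))))]

theorem grenander_touchpoint_integral_identity_general
    (m : ℕ)
    (Fn Fhat : StieltjesFunction ℝ) (fn : ℝ → ℝ) (φ : ℝ → ℝ)
    -- touch points of the least concave majorant
    (τ : Fin (m + 1) → ℝ) (hτmono : StrictMono τ)
    -- `Fhat` touches `Fn` exactly at the points `τ i`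
    (htouch : ∀ x ∈ Icc (τ 0) (τ (Fin.last m)), (Fhat x = Fn x ↔ ∃ i, x = τ i))
    -- `fn` is the left derivative of `Fhat`, constant between touch points
    (hconst : ∀ i : Fin m, ∀ x ∈ Ioc (τ i.castSucc) (τ i.succ), fn x = fn (τ i.succ)) :
    ∫ x in Ioc (τ 0) (τ (Fin.last m)), φ (fn x) ∂Fhat.measure =
      ∫ x in Ioc (τ 0) (τ (Fin.last m)), φ (fn x) ∂Fn.measure := by
  have hτ_mem : ∀ j, τ j ∈ Icc (τ 0) (τ (Fin.last m)) := fun j =>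
    ⟨hτmono.monotone (Fin.zero_le j), hτmono.monotone (Fin.le_last j)⟩
  have hagree : ∀ j, Fhat (τ j) = Fn (τ j) := fun j => (htouch _ (hτ_mem j)).2 ⟨j, rfl⟩
  have hφconst : ∀ i : Fin m, ∀ x ∈ Ioc (τ i.castSucc) (τ i.succ),
      φ (fn x) = φ (fn (τ i.succ)) := fun i x hx => congrArg φ (hconst i x hx)
  rw [Fhat.setIntegral_Ioc_eq_sum_of_forall_Ioc_eq hτmono.monotone hφconst,
    Fn.setIntegral_Ioc_eq_sum_of_forall_Ioc_eq hτmono.monotone hφconst]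
  simp only [hagree]

/-- `∫ φ(f̂ₙ) d(F̂ₙ - 𝔽ₙ) = 0` for the Grenander estimator, stated as
equality of the two Stieltjes integrals. -/
theorem grenander_touchpoint_integral_identity
    (n m : ℕ) (hn : 0 < n) (hm : 0 < m)
    (X : Fin n → ℝ) (hXnn : ∀ i, 0 ≤ X i) (hXmono : Monotone X)
    (Fn Fhat : StieltjesFunction ℝ) (fn : ℝ → ℝ) (φ : ℝ → ℝ)
    -- `Fn` is the empirical CDF of the points `X i`
    (hFn : ∀ x : ℝ, Fn x = (n : ℝ)⁻¹ * ∑ i, if X i ≤ x then (1:ℝ) else 0)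
    -- touch points of the least concave majorant
    (τ : Fin (m + 1) → ℝ) (hτmono : StrictMono τ)
    (hτ0 : τ 0 = 0) (hτlast : ∀ i, X i ≤ τ (Fin.last m))
    -- `Fhat` is the least concave majorant of `Fn` on `[τ 0, τ m]`
    (hconc : ConcaveOn ℝ (Icc (τ 0) (τ (Fin.last m))) (fun x => Fhat x))
    (hmaj : ∀ x ∈ Icc (τ 0) (τ (Fin.last m)), Fn x ≤ Fhat x)
    (hleast : ∀ G : ℝ → ℝ, ConcaveOn ℝ (Icc (τ 0) (τ (Fin.last m))) G →
      (∀ x ∈ Icc (τ 0) (τ (Fin.last m)), Fn x ≤ G x) →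
      ∀ x ∈ Icc (τ 0) (τ (Fin.last m)), Fhat x ≤ G x)
    -- `Fhat` touches `Fn` exactly at the points `τ i`
    (htouch : ∀ x ∈ Icc (τ 0) (τ (Fin.last m)), (Fhat x = Fn x ↔ ∃ i, x = τ i))
    -- `fn` is the left derivative of `Fhat`, constant between touch points
    (hfn : ∀ x : ℝ, fn x = derivWithin (fun y => Fhat y) (Iio x) x)
    (hconst : ∀ i : Fin m, ∀ x ∈ Ioc (τ i.castSucc) (τ i.succ), fn x = fn (τ i.succ))
    -- integrability so that both integrals exist
    (hint1 : Integrable (fun x => φ (fn x)) (Fhat.measure.restrict (Ioc (τ 0) (τ (Fin.last m)))))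
    (hint2 : Integrable (fun x => φ (fn x)) (Fn.measure.restrict (Ioc (τ 0) (τ (Fin.last m))))) :
    ∫ x in Ioc (τ 0) (τ (Fin.last m)), φ (fn x) ∂Fhat.measure =
      ∫ x in Ioc (τ 0) (τ (Fin.last m)), φ (fn x) ∂Fn.measure :=
  grenander_touchpoint_integral_identity_general m Fn Fhat fn φ τ hτmono htouch hconst
end

section
/- Let $X_1,\ldots,X_n$ be i.i.d. with decreasing density $f_0$ on $[0,1]$ that is constant on $(a,b]$, and fix $x \in (a,b)$, $t_0 > 0$, $k_0 > 0$. Set $c_0 = t_0/(f_0(b) + t_0/k_0)$. Then for all $n \ge (k_0/3)^2$ and all $t \ge t_0$, $P\big(\hat f_n(x) > f_0(x) + n^{-1/2} t\big) \le \exp\big\{-c_0\frac{t(x-a)}{2}\big\}$. -/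
/-!
Switching: if the left slope at `x` of the least concave majorant of `F_n` exceeds
`β = f₀(b) + t / √n`, the maximiser `u ≥ 0` of `F_n(y) - β y` lies at or right of `x`, for
otherwise the line of slope `β` through `(u, F_n(u))` would be a concave majorant touching `F_n`
left of `x`. Hence `F_n(u) - F_n(a) ≥ β (u - a)`: some `k ≥ m = n β (x - a)` sample points fall
in `(a, a + k / (nβ)]`, a window of `F₀`-mass at most `k / (nθ)` with `θ = β / f₀(b)`.

Cutting the line into the cells `(a + c / (nβ), a + (c + 1) / (nβ)]` makes the probability of
such a crossing a multinomial sum. Tilting the cell law by `θ` on the cells left of `k` gives a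
likelihood ratio of at least `exp (m h(θ) / θ)`, `h(v) = v (log v - 1) + 1`, on a crossing at
`k`; the tilts for different `k` agree on events decided by the first crossing, so the crossing
probability is at most `exp (-m h(θ) / θ) = exp (-n f₀(b) (x - a) h(θ))`. Bernstein's bound
`h(1 + λ) ≥ λ² / (2 (1 + λ / 3))` with `λ = t / (√n f₀(b))` and `k₀ ≤ 3 √n` give the exponent
`c₀ t (x - a) / 2`.
-/

open Set MeasureTheory ProbabilityTheory

noncomputable def lcmOn (g : ℝ → ℝ) (s : Set ℝ) : ℝ → ℝ :=
  fun x => sInf {y | ∃ φ : ℝ → ℝ, ConcaveOn ℝ s φ ∧ (∀ z ∈ s, g z ≤ φ z) ∧ y = φ x}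

noncomputable def grenEst (F : ℝ → ℝ) (x : ℝ) : ℝ :=
  derivWithin (lcmOn F (Ici 0)) (Iio x) x

noncomputable def empCDF (n : ℕ) (X : Fin n → ℝ) : ℝ → ℝ :=
  fun y => (n : ℝ)⁻¹ * ∑ i, if X i ≤ y then (1:ℝ) else 0

open Topology

section LeastConcaveMajorant

variable {g φ : ℝ → ℝ} {s : Set ℝ} {z : ℝ}

lemma lcmOn_le (hφ : ConcaveOn ℝ s φ) (hgφ : ∀ y ∈ s, g y ≤ φ y) (hz : z ∈ s) :
    lcmOn g s z ≤ φ z :=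
  csInf_le ⟨g z, by rintro _ ⟨ψ, -, hgψ, rfl⟩; exact hgψ z hz⟩ ⟨φ, hφ, hgφ, rfl⟩

lemma le_lcmOn (hφ : ConcaveOn ℝ s φ) (hgφ : ∀ y ∈ s, g y ≤ φ y) (hz : z ∈ s) :
    g z ≤ lcmOn g s z :=
  le_csInf ⟨φ z, φ, hφ, hgφ, rfl⟩ (by rintro _ ⟨ψ, -, hgψ, rfl⟩; exact hgψ z hz)

lemma concaveOn_lcmOn (hs : Convex ℝ s) (hφ : ConcaveOn ℝ s φ) (hgφ : ∀ y ∈ s, g y ≤ φ y) :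
    ConcaveOn ℝ s (lcmOn g s) := by
  refine ⟨hs, fun u hu v hv α γ hα hγ hαγ => ?_⟩
  refine le_csInf ⟨φ (α • u + γ • v), φ, hφ, hgφ, rfl⟩ ?_
  rintro _ ⟨ψ, hψ, hgψ, rfl⟩
  calc α • lcmOn g s u + γ • lcmOn g s v ≤ α • ψ u + γ • ψ v := by
        gcongr
        · exact lcmOn_le hψ hgψ hu
        · exact lcmOn_le hψ hgψ hv
    _ ≤ ψ (α • u + γ • v) := hψ.2 hu hv hα hγ hαγ

end LeastConcaveMajorant

lemma derivWithin_Iio_le_of_slope_le {f : ℝ → ℝ} {x β : ℝ} (hβ : 0 ≤ β)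
    (h : ∀ᶠ y in 𝓝[<] x, slope f x y ≤ β) : derivWithin f (Iio x) x ≤ β := by
  by_cases hf : DifferentiableWithinAt ℝ f (Iio x) x
  · have := hasDerivWithinAt_iff_tendsto_slope.mp hf.hasDerivWithinAt
    rw [sdiff_singleton_eq_self self_notMem_Iio] at this
    exact le_of_tendsto this h
  · rw [derivWithin_zero_of_not_differentiableWithinAt hf]
    exact hβ

lemma grenEst_le_of_isMaxOn {F : ℝ → ℝ} {β u x : ℝ} (hβ : 0 ≤ β) (hu : 0 ≤ u) (hux : u < x)
    (hmax : IsMaxOn (fun y => F y - β * y) (Ici 0) u) : grenEst F x ≤ β := by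
  set ℓ : ℝ → ℝ := fun y => F u + β * (y - u)
  have hℓ : ConcaveOn ℝ (Ici 0) ℓ := ⟨convex_Ici 0, fun _ _ _ _ α γ _ _ hαγ => by
    simp only [ℓ, smul_eq_mul]; linear_combination (F u - β * u) * hαγ⟩
  have hFℓ : ∀ y ∈ Ici (0 : ℝ), F y ≤ ℓ y := fun y hy => by
    have := isMaxOn_iff.mp hmax y hy; simp only [ℓ]; linarith
  set M := lcmOn F (Ici 0)
  have hM : ConcaveOn ℝ (Ici 0) M := concaveOn_lcmOn (convex_Ici 0) hℓ hFℓ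
  have hslope : ∀ y ∈ Ioo u x, slope M x y ≤ β := by
    rintro y ⟨huy, hyx⟩
    have hy : y ∈ Ici (0 : ℝ) := le_trans hu huy.le
    have hMy : M y ≤ ℓ y := lcmOn_le hℓ hFℓ hy
    have hMu : ℓ u ≤ M u := by simpa [ℓ] using le_lcmOn hℓ hFℓ (mem_Ici.2 hu)
    have hadj := hM.slope_anti_adjacent (mem_Ici.2 hu) (mem_Ici.2 (hu.trans hux.le)) huy hyx
    rw [slope_def_field, ← neg_div_neg_eq, neg_sub, neg_sub]
    refine hadj.trans ((div_le_iff₀ (sub_pos.2 huy)).2 ?_)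
    simp only [ℓ] at hMy hMu
    linarith
  exact derivWithin_Iio_le_of_slope_le hβ
    (Filter.mem_of_superset (Ioo_mem_nhdsLT hux) hslope)

section EmpiricalProcess

open Finset

variable {n : ℕ}

noncomputable def empCount (X : Fin n → ℝ) (a s : ℝ) : ℕ := #{i | X i ∈ Ioc a s}

lemma empCDF_sub_empCDF (X : Fin n → ℝ) {a s : ℝ} (has : a ≤ s) :
    empCDF n X s - empCDF n X a = empCount X a s / n := by
  classical
  have hind : ∀ i, ((if X i ≤ s then (1 : ℝ) else 0) - if X i ≤ a then 1 else 0)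
      = if X i ∈ Ioc a s then 1 else 0 := fun i => by
    by_cases h1 : X i ≤ a
    · simp [h1, h1.trans has, not_lt.2 h1]
    · by_cases h2 : X i ≤ s <;> simp [h1, h2, lt_of_not_ge h1]
  simp only [empCDF, empCount]
  rw [← mul_sub, ← Finset.sum_sub_distrib, Finset.sum_congr rfl fun i _ => hind i, Finset.sum_boole,
    div_eq_inv_mul]

/-- The empirical distribution function is constant between data points, so `F_n(y) - β y`
is maximal at `0` or at a nonnegative data point. -/
lemma exists_isMaxOn_empCDF_sub (X : Fin n → ℝ) {β : ℝ} (hβ : 0 ≤ β) :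
    ∃ u, 0 ≤ u ∧ IsMaxOn (fun y => empCDF n X y - β * y) (Ici 0) u := by
  classical
  set C : Finset ℝ := insert 0 ((Finset.univ.image X).filter (0 ≤ ·))
  have hC : ∀ c ∈ C, 0 ≤ c := by simp [C]
  obtain ⟨u, huC, hu⟩ := C.exists_max_image (fun y => empCDF n X y - β * y) ⟨0, mem_insert_self ..⟩
  refine ⟨u, hC u huC, fun y (hy : 0 ≤ y) => ?_⟩
  have hD : (C.filter (· ≤ y)).Nonempty := ⟨0, by simp [C, hy]⟩
  set c := (C.filter (· ≤ y)).max' hD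
  obtain ⟨hcC, hcy⟩ := Finset.mem_filter.1 ((C.filter (· ≤ y)).max'_mem hD)
  have hFc : empCDF n X y = empCDF n X c := by
    simp only [empCDF]
    congr 1
    refine Finset.sum_congr rfl fun i _ => if_congr ⟨fun hXy => ?_, fun h => h.trans hcy⟩ rfl rfl
    by_contra hXc
    have hXC : X i ∈ C.filter (· ≤ y) := by
      simp [C, hXy, le_trans (hC c hcC) (le_of_not_ge hXc)]
    exact hXc ((C.filter (· ≤ y)).le_max' _ hXC)
  show empCDF n X y - β * y ≤ empCDF n X u - β * u
  rw [hFc]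
  linarith [hu c hcC, mul_le_mul_of_nonneg_left hcy hβ]

lemma exists_le_empCDF_sub_of_lt_grenEst (X : Fin n → ℝ) {a x β : ℝ} (ha : 0 ≤ a) (hβ : 0 ≤ β)
    (h : β < grenEst (empCDF n X) x) :
    ∃ s, x ≤ s ∧ β * (s - a) ≤ empCDF n X s - empCDF n X a := by
  obtain ⟨u, hu, hmax⟩ := exists_isMaxOn_empCDF_sub X hβ
  refine ⟨u, not_lt.1 fun hux => h.not_ge (grenEst_le_of_isMaxOn hβ hu hux hmax), ?_⟩
  have := isMaxOn_iff.mp hmax a ha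
  linarith

lemma exists_le_empCount_of_lt_grenEst (X : Fin n → ℝ) (hn : 0 < n) {a x β : ℝ} (ha : 0 ≤ a)
    (hax : a < x) (hβ : 0 < β) (h : β < grenEst (empCDF n X) x) :
    ∃ k : ℕ, n * β * (x - a) ≤ k ∧ k ≤ empCount X a (a + k / (n * β)) := by
  obtain ⟨s, hxs, hs⟩ := exists_le_empCDF_sub_of_lt_grenEst X ha hβ.le h
  have hn' : (0 : ℝ) < n := Nat.cast_pos.2 hn
  rw [empCDF_sub_empCDF X (hax.le.trans hxs), le_div_iff₀ hn'] at hs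
  refine ⟨empCount X a s, by nlinarith, Finset.card_le_card (Finset.monotone_filter_right _ ?_)⟩
  intro i _ hi
  refine ⟨hi.1, hi.2.trans ?_⟩
  rw [← sub_le_iff_le_add', le_div_iff₀ (by positivity)]
  linarith

end EmpiricalProcess

noncomputable def bennettH (v : ℝ) : ℝ := v * (Real.log v - 1) + 1

lemma bennettH_nonneg {v : ℝ} (hv : 0 < v) : 0 ≤ bennettH v := by
  have h := mul_le_mul_of_nonneg_left (Real.one_sub_inv_le_log_of_pos hv) hv.le
  rw [mul_sub, mul_inv_cancel₀ hv.ne'] at h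
  unfold bennettH
  linarith

lemma div_mul_bennettH {θ : ℝ} (hθ : 0 < θ) (N : ℝ) :
    N / θ * bennettH θ = N * Real.log θ - N * (1 - θ⁻¹) := by
  unfold bennettH
  field_simp
  ring

lemma nonneg_of_hasDerivAt_nonneg {f f' : ℝ → ℝ} (hf : ∀ y, 0 ≤ y → HasDerivAt f (f' y) y)
    (hf' : ∀ y, 0 < y → 0 ≤ f' y) (h0 : f 0 = 0) {z : ℝ} (hz : 0 ≤ z) : 0 ≤ f z := by
  have hmono : MonotoneOn f (Ici 0) := by
    refine monotoneOn_of_hasDerivWithinAt_nonneg (f' := f') (convex_Ici 0)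
      (fun y hy => (hf y hy).continuousAt.continuousWithinAt) (fun y hy => ?_) (fun y hy => ?_)
    all_goals rw [interior_Ici] at hy
    · exact (hf y (le_of_lt hy)).hasDerivWithinAt
    · exact hf' y hy
  simpa [h0] using hmono self_mem_Ici hz hz

lemma hasDerivAt_log_one_add {y : ℝ} (hy : 0 ≤ y) :
    HasDerivAt (fun y => Real.log (1 + y)) (1 + y)⁻¹ y := by
  simpa [one_div] using ((hasDerivAt_id y).const_add 1).log (by positivity)

lemma two_mul_le_two_add_mul_log_one_add {y : ℝ} (hy : 0 ≤ y) :
    2 * y ≤ (2 + y) * Real.log (1 + y) := by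
  suffices h : 0 ≤ (2 + y) * Real.log (1 + y) - 2 * y by linarith
  refine nonneg_of_hasDerivAt_nonneg (f := fun y => (2 + y) * Real.log (1 + y) - 2 * y)
    (f' := fun y => Real.log (1 + y) - (1 - (1 + y)⁻¹)) (fun z hz => ?_) (fun z hz => ?_)
    (by simp) hy
  · refine (((hasDerivAt_id z).const_add 2).mul (hasDerivAt_log_one_add hz)).sub
      ((hasDerivAt_id z).const_mul 2) |>.congr_deriv ?_
    simp only [id]
    field_simp
    ring
  · exact sub_nonneg.2 (Real.one_sub_inv_le_log_of_pos (by linarith))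

lemma sq_div_le_bennettH_one_add {l : ℝ} (hl : 0 ≤ l) :
    l ^ 2 / (2 * (1 + l / 3)) ≤ bennettH (1 + l) := by
  have h : 0 ≤ (2 + 2 / 3 * l) * ((1 + l) * Real.log (1 + l) - l) - l ^ 2 := by
    refine nonneg_of_hasDerivAt_nonneg
      (f := fun y => (2 + 2 / 3 * y) * ((1 + y) * Real.log (1 + y) - y) - y ^ 2)
      (f' := fun y => 4 / 3 * ((2 + y) * Real.log (1 + y) - 2 * y)) (fun y hy => ?_)
      (fun y hy => by linarith [two_mul_le_two_add_mul_log_one_add hy.le]) (by simp) hl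
    have hlog := ((hasDerivAt_id y).const_add 1).mul (hasDerivAt_log_one_add hy)
    refine (((hasDerivAt_id y).const_mul (2 / 3)).const_add 2).mul (hlog.sub (hasDerivAt_id y))
      |>.sub (hasDerivAt_pow 2 y) |>.congr_deriv ?_
    simp only [id, Pi.mul_apply, Pi.sub_apply]
    field_simp
    ring
  unfold bennettH
  rw [div_le_iff₀ (by positivity)]
  linarith

/-- `θ ^ N * w ^ (n - N)`, `w = (1 - θ u) / (1 - u)`, is the likelihood ratio of `N` successes in
`n` trials with success probability `θ u` against success probability `u`. -/
lemma exp_div_mul_bennettH_le {n N : ℕ} {θ u : ℝ} (hNn : N ≤ n) (hθ : 1 < θ) (hu : 0 ≤ u)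
    (hnu : n * θ * u ≤ N) :
    Real.exp (N / θ * bennettH θ) ≤ θ ^ N * ((1 - θ * u) / (1 - u)) ^ (n - N) := by
  have hθ0 : 0 < θ := by linarith
  have hpow : θ ^ N = Real.exp (N * Real.log θ) := by
    rw [← Real.rpow_natCast, Real.rpow_def_of_pos hθ0, mul_comm]
  have hinv : θ⁻¹ ≤ 1 := inv_le_one_of_one_le₀ hθ.le
  rw [div_mul_bennettH hθ0, sub_eq_add_neg, Real.exp_add, hpow]
  rcases hNn.eq_or_lt with rfl | hlt
  · simp only [Nat.sub_self, pow_zero, mul_one]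
    exact mul_le_of_le_one_right (Real.exp_pos _).le
      (Real.exp_le_one_iff.2 (by nlinarith [Nat.cast_nonneg (α := ℝ) N]))
  have hlt' : (N : ℝ) < n := Nat.cast_lt.2 hlt
  have hθu : θ * u < 1 := by
    by_contra! h
    nlinarith
  -- `1 + x ≤ exp x` at `x = (θ - 1) u / (1 - θ u)` bounds `w` from below by `exp (-x)`
  set x := (θ - 1) * u / (1 - θ * u)
  have hw : Real.exp (-x) ≤ (1 - θ * u) / (1 - u) := by
    have h1 : 0 < 1 - θ * u := by linarith
    have h2 : 0 < 1 - u := by nlinarith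
    have h1x : 1 + x = ((1 - θ * u) / (1 - u))⁻¹ := by
      simp only [x]
      field_simp
      ring
    rw [Real.exp_neg, ← inv_inv ((1 - θ * u) / (1 - u)), ← h1x]
    have := Real.add_one_le_exp x
    exact inv_anti₀ (by rw [h1x]; positivity) (by linarith)
  have hx : ((n - N : ℕ) : ℝ) * x ≤ N * (1 - θ⁻¹) := by
    rw [Nat.cast_sub hNn, ← mul_div_assoc, div_le_iff₀ (by linarith)]
    have : (θ - 1) * (N - n * θ * u) ≥ 0 := mul_nonneg (by linarith) (by linarith)
    field_simp
    nlinarith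
  gcongr
  calc Real.exp (-(N * (1 - θ⁻¹))) ≤ Real.exp (((n - N : ℕ) : ℝ) * -x) :=
        Real.exp_le_exp.2 (by linarith)
    _ = Real.exp (-x) ^ (n - N) := Real.exp_nat_mul _ _
    _ ≤ _ := pow_le_pow_left₀ (Real.exp_pos _).le hw _

open Finset in
/-- Tower property of product weights under a coarsening `q` of the cells. -/
lemma sum_mul_prod_eq_of_sum_fiber_eq {ι κ : Type*} [Fintype ι] [DecidableEq ι] [Fintype κ]
    [DecidableEq κ] (q : κ → κ) {H : (ι → κ) → ℝ} (hH : ∀ v, H (q ∘ v) = H v) {A B : κ → ℝ}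
    (hAB : ∀ c', ∑ c with q c = c', A c = ∑ c with q c = c', B c) :
    ∑ v, H v * ∏ i, A (v i) = ∑ v, H v * ∏ i, B (v i) := by
  have key : ∀ C : κ → ℝ,
      ∑ v, H v * ∏ i, C (v i) = ∑ v', H v' * ∏ i, ∑ c with q c = v' i, C c := by
    intro C
    rw [← sum_fiberwise univ (q ∘ ·)]
    refine sum_congr rfl fun v' _ => ?_
    rw [prod_univ_sum, mul_sum]
    have hfib :
        Fintype.piFinset (fun i => univ.filter (q · = v' i)) = univ.filter (q ∘ · = v') := by
      ext v
      simp [Fintype.mem_piFinset, funext_iff]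
    rw [hfib]
    refine sum_congr rfl fun v hv => ?_
    rw [← (mem_filter.1 hv).2, hH]
  rw [key, key]
  simp only [hAB]

section CellSamples

open Finset

variable {n : ℕ}

def cellCount (j : ℕ) (v : Fin n → Fin (n + 1)) : ℕ := #{i | (v i : ℕ) < j}

def truncCell (k : ℕ) (c : Fin (n + 1)) : Fin (n + 1) := if (c : ℕ) < k then c else Fin.last n

def IsFirstCrossing (m : ℝ) (k : ℕ) (v : Fin n → Fin (n + 1)) : Prop :=
  (m ≤ k ∧ k ≤ cellCount k v) ∧ ∀ j < k, m ≤ j → cellCount j v < j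

lemma cellCount_le (j : ℕ) (v : Fin n → Fin (n + 1)) : cellCount j v ≤ n :=
  (card_filter_le _ _).trans (card_fin n).le

lemma cellCount_truncCell {j k : ℕ} (hjk : j ≤ k) (hjn : j ≤ n) (v : Fin n → Fin (n + 1)) :
    cellCount j (truncCell k ∘ v) = cellCount j v := by
  unfold cellCount truncCell
  congr 1
  refine filter_congr fun i _ => ?_
  simp only [Function.comp_apply]
  split_ifs <;> simp
  omega

lemma isFirstCrossing_truncCell_iff {m : ℝ} {k : ℕ} (hk : k ≤ n) (v : Fin n → Fin (n + 1)) :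
    IsFirstCrossing m k (truncCell k ∘ v) ↔ IsFirstCrossing m k v := by
  unfold IsFirstCrossing
  rw [cellCount_truncCell le_rfl hk]
  exact and_congr_right fun _ => forall₂_congr fun j hj => by
    rw [cellCount_truncCell hj.le (hj.le.trans hk)]

lemma IsFirstCrossing.eq {m : ℝ} {k k' : ℕ} {v : Fin n → Fin (n + 1)}
    (h : IsFirstCrossing m k v) (h' : IsFirstCrossing m k' v) : k = k' := by
  by_contra hne
  rcases lt_or_gt_of_ne hne with hlt | hlt
  · exact (h'.2 k hlt h.1.1).not_ge h.1.2
  · exact (h.2 k' hlt h'.1.1).not_ge h'.1.2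

lemma exists_isFirstCrossing {m : ℝ} {v : Fin n → Fin (n + 1)}
    (h : ∃ k : ℕ, m ≤ k ∧ k ≤ cellCount k v) : ∃ k, IsFirstCrossing m k v := by
  classical
  exact ⟨Nat.find h, Nat.find_spec h, fun j hj hmj =>
    lt_of_not_ge fun hle => Nat.find_min h hj ⟨hmj, hle⟩⟩

end CellSamples

section TiltedCellLaw

open Finset

variable {n : ℕ} (r : Fin (n + 1) → ℝ) (θ : ℝ)

noncomputable def cumMass (j : ℕ) : ℝ := ∑ c with c.val < j, r c

noncomputable def tiltWeight (k : ℕ) (c : Fin (n + 1)) : ℝ :=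
  if (c : ℕ) < k then θ else (1 - θ * cumMass r k) / (1 - cumMass r k)

variable {r θ}

lemma cumMass_nonneg (hr : ∀ c, 0 ≤ r c) (j : ℕ) : 0 ≤ cumMass r j :=
  sum_nonneg fun c _ => hr c

lemma mul_cumMass_le_one (hub : ∀ j ≤ n, n * θ * cumMass r j ≤ j) {j : ℕ} (hj : j ≤ n) :
    θ * cumMass r j ≤ 1 := by
  rcases n.eq_zero_or_pos with rfl | hn
  · obtain rfl : j = 0 := Nat.le_zero.1 hj
    simp [cumMass]
  · have h := (hub j hj).trans (Nat.cast_le.2 hj)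
    rw [mul_assoc] at h
    exact (mul_le_iff_le_one_right (Nat.cast_pos.2 hn)).1 h

lemma cumMass_lt_one (hθ : 1 < θ) (hub : ∀ j ≤ n, n * θ * cumMass r j ≤ j) {j : ℕ}
    (hj : j ≤ n) : cumMass r j < 1 := by
  have := mul_cumMass_le_one hub hj
  by_contra!
  nlinarith

lemma tiltWeight_nonneg (hθ : 1 < θ) (hub : ∀ j ≤ n, n * θ * cumMass r j ≤ j) {k : ℕ}
    (hk : k ≤ n) (c : Fin (n + 1)) : 0 ≤ tiltWeight r θ k c := by
  unfold tiltWeight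
  split_ifs
  · linarith
  · exact div_nonneg (by linarith [mul_cumMass_le_one hub hk])
      (by linarith [cumMass_lt_one hθ hub hk])

/-- For `k = 0`: `tiltWeight r θ j` is a probability density with respect to `r`. -/
lemma sum_tiltWeight_mul_of_le (hr1 : ∑ c, r c = 1) (hθ : 1 < θ)
    (hub : ∀ j ≤ n, n * θ * cumMass r j ≤ j) {j k : ℕ} (hkj : k ≤ j) (hj : j ≤ n) :
    ∑ c with k ≤ c.val, tiltWeight r θ j c * r c = 1 - θ * cumMass r k := by
  have hsplit : ∑ c with k ≤ c.val, tiltWeight r θ j c * r c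
      = θ * ∑ c, (if k ≤ c.val ∧ c.val < j then r c else 0)
        + (1 - θ * cumMass r j) / (1 - cumMass r j) * ∑ c, (if j ≤ c.val then r c else 0) := by
    rw [sum_filter, mul_sum, mul_sum, ← sum_add_distrib]
    refine sum_congr rfl fun c _ => ?_
    unfold tiltWeight
    split_ifs <;> first | (exfalso; omega) | ring
  have hmid : ∑ c, (if k ≤ c.val ∧ c.val < j then r c else 0) = cumMass r j - cumMass r k := by
    rw [cumMass, cumMass, sum_filter, sum_filter, eq_sub_iff_add_eq, ← sum_add_distrib]
    refine sum_congr rfl fun c _ => ?_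
    split_ifs <;> first | (exfalso; omega) | ring
  have htail : ∑ c, (if j ≤ c.val then r c else 0) = 1 - cumMass r j := by
    rw [cumMass, sum_filter, eq_sub_iff_add_eq, ← sum_add_distrib, ← hr1]
    refine sum_congr rfl fun c _ => ?_
    split_ifs <;> first | (exfalso; omega) | ring
  have hw : (1 - θ * cumMass r j) / (1 - cumMass r j) * (1 - cumMass r j) = 1 - θ * cumMass r j :=
    div_mul_cancel₀ _ (sub_ne_zero.2 (cumMass_lt_one hθ hub hj).ne')
  rw [hsplit, hmid, htail, hw]
  ring

lemma sum_fiber_truncCell_tiltWeight (hr1 : ∑ c, r c = 1) (hθ : 1 < θ)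
    (hub : ∀ j ≤ n, n * θ * cumMass r j ≤ j) {k : ℕ} (hk : k ≤ n) (c' : Fin (n + 1)) :
    ∑ c with truncCell k c = c', tiltWeight r θ n c * r c
      = ∑ c with truncCell k c = c', tiltWeight r θ k c * r c := by
  by_cases hc' : c' = Fin.last n
  · subst hc'
    have hfib : univ.filter (truncCell k · = Fin.last n) = univ.filter (k ≤ ·.val) := by
      ext c
      rw [mem_filter, mem_filter, truncCell]
      split_ifs with h
      · rw [Fin.ext_iff, Fin.val_last]
        omega
      · simpa using h
    rw [hfib, sum_tiltWeight_mul_of_le hr1 hθ hub hk le_rfl,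
      sum_tiltWeight_mul_of_le hr1 hθ hub le_rfl hk]
  · refine sum_congr rfl fun c hc => ?_
    have hck : (c : ℕ) < k := by
      by_contra h
      rw [mem_filter, truncCell, if_neg h] at hc
      exact hc' hc.2.symm
    simp [tiltWeight, hck, hck.trans_le hk]

lemma prod_tiltWeight (k : ℕ) (v : Fin n → Fin (n + 1)) :
    ∏ i, tiltWeight r θ k (v i)
      = θ ^ cellCount k v * ((1 - θ * cumMass r k) / (1 - cumMass r k)) ^ (n - cellCount k v) := by
  have hcard := card_filter_add_card_filter_not (s := univ) (fun i => (v i : ℕ) < k)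
  rw [card_univ, Fintype.card_fin] at hcard
  simp only [tiltWeight, prod_ite, prod_const, cellCount]
  congr 2
  omega

lemma exp_le_prod_tiltWeight (hr : ∀ c, 0 ≤ r c) (hθ : 1 < θ)
    (hub : ∀ j ≤ n, n * θ * cumMass r j ≤ j) {m : ℝ} {k : ℕ} {v : Fin n → Fin (n + 1)}
    (h : IsFirstCrossing m k v) : Real.exp (m / θ * bennettH θ) ≤ ∏ i, tiltWeight r θ k (v i) := by
  obtain ⟨⟨hmk, hkN⟩, -⟩ := h
  have hθ0 : 0 < θ := by linarith
  have hkn : k ≤ n := hkN.trans (cellCount_le k v)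
  rw [prod_tiltWeight]
  refine le_trans ?_ (exp_div_mul_bennettH_le (cellCount_le k v) hθ (cumMass_nonneg hr k)
    ((hub k hkn).trans (Nat.cast_le.2 hkN)))
  gcongr
  · exact bennettH_nonneg hθ0
  · exact hmk.trans (Nat.cast_le.2 hkN)

lemma sum_prod_tiltWeight_mul (hr1 : ∑ c, r c = 1) (hθ : 1 < θ)
    (hub : ∀ j ≤ n, n * θ * cumMass r j ≤ j) :
    ∑ v : Fin n → Fin (n + 1), ∏ i, tiltWeight r θ n (v i) * r (v i) = 1 := by
  have h := sum_tiltWeight_mul_of_le hr1 hθ hub (Nat.zero_le n) le_rfl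
  simp only [Nat.zero_le, filter_true, cumMass, Nat.not_lt_zero, filter_false, sum_empty,
    mul_zero, sub_zero] at h
  rw [← Fintype.prod_sum (fun _ c => tiltWeight r θ n c * r c), h, prod_const_one]

end TiltedCellLaw

section MaximalInequality

open Finset

variable {n : ℕ} {r : Fin (n + 1) → ℝ} {θ : ℝ}

open Classical in
lemma sum_isFirstCrossing_le (hr : ∀ c, 0 ≤ r c) (hr1 : ∑ c, r c = 1) (hθ : 1 < θ)
    (hub : ∀ j ≤ n, n * θ * cumMass r j ≤ j) (m : ℝ) {k : ℕ} (hkn : k ≤ n) :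
    ∑ v with IsFirstCrossing m k v, ∏ i, r (v i)
      ≤ Real.exp (-(m / θ * bennettH θ))
        * ∑ v with IsFirstCrossing m k v, ∏ i, tiltWeight r θ n (v i) * r (v i) := by
  -- the first crossing at `k` is decided by the sample coarsened at `k`, so the tilt `n` may be
  -- replaced by the tilt `k`
  have htower : ∑ v with IsFirstCrossing m k v, ∏ i, tiltWeight r θ n (v i) * r (v i)
      = ∑ v with IsFirstCrossing m k v, ∏ i, tiltWeight r θ k (v i) * r (v i) := by
    have hind : ∀ F : (Fin n → Fin (n + 1)) → ℝ, ∑ v with IsFirstCrossing m k v, F v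
        = ∑ v, (if IsFirstCrossing m k v then 1 else 0) * F v := fun F => by
      rw [sum_filter]
      exact sum_congr rfl fun v _ => (boole_mul _ _).symm
    rw [hind, hind]
    exact sum_mul_prod_eq_of_sum_fiber_eq (truncCell k)
      (fun v => by simp only [isFirstCrossing_truncCell_iff hkn])
      (sum_fiber_truncCell_tiltWeight hr1 hθ hub hkn)
  rw [htower, mul_sum]
  refine sum_le_sum fun v hv => ?_
  have hexp := exp_le_prod_tiltWeight hr hθ hub (mem_filter.1 hv).2
  have hprod : 0 ≤ ∏ i, r (v i) := prod_nonneg fun i _ => hr _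
  rw [prod_mul_distrib]
  calc ∏ i, r (v i)
      = Real.exp (-(m / θ * bennettH θ)) * (Real.exp (m / θ * bennettH θ) * ∏ i, r (v i)) := by
        rw [← mul_assoc, ← Real.exp_add, neg_add_cancel, Real.exp_zero, one_mul]
    _ ≤ _ := by gcongr

/-- Maximal inequality for the cell counts of an i.i.d. sample: change of measure to the tilted
law `tiltWeight r θ n • r`, stopped at the first crossing. -/
theorem sum_prod_le_of_forall_exists_crossing (hr : ∀ c, 0 ≤ r c) (hr1 : ∑ c, r c = 1)
    (hθ : 1 < θ) (hub : ∀ j ≤ n, n * θ * cumMass r j ≤ j) {m : ℝ}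
    {S : Finset (Fin n → Fin (n + 1))} (hS : ∀ v ∈ S, ∃ k : ℕ, m ≤ k ∧ k ≤ cellCount k v) :
    ∑ v ∈ S, ∏ i, r (v i) ≤ Real.exp (-(m / θ * bennettH θ)) := by
  classical
  set E : ℕ → Finset (Fin n → Fin (n + 1)) := fun k => univ.filter (IsFirstCrossing m k)
  have hSE : S ⊆ (range (n + 1)).biUnion E := fun v hv => by
    obtain ⟨k, hk⟩ := exists_isFirstCrossing (hS v hv)
    exact mem_biUnion.2 ⟨k, mem_range.2 (Nat.lt_succ_of_le (hk.1.2.trans (cellCount_le k v))),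
      mem_filter.2 ⟨mem_univ v, hk⟩⟩
  have hdisj : (Finset.range (n + 1) : Set ℕ).PairwiseDisjoint E := fun k _ k' _ hne =>
    disjoint_filter.2 fun v _ h h' => hne (h.eq h')
  have htilt : ∀ v : Fin n → Fin (n + 1), 0 ≤ ∏ i, tiltWeight r θ n (v i) * r (v i) :=
    fun v => prod_nonneg fun i _ => mul_nonneg (tiltWeight_nonneg hθ hub le_rfl _) (hr _)
  calc ∑ v ∈ S, ∏ i, r (v i)
      ≤ ∑ v ∈ (range (n + 1)).biUnion E, ∏ i, r (v i) :=
        sum_le_sum_of_subset_of_nonneg hSE fun v _ _ => prod_nonneg fun i _ => hr _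
    _ ≤ ∑ k ∈ range (n + 1), Real.exp (-(m / θ * bennettH θ))
          * ∑ v ∈ E k, ∏ i, tiltWeight r θ n (v i) * r (v i) := by
        rw [sum_biUnion hdisj]
        exact sum_le_sum fun k hk =>
          sum_isFirstCrossing_le hr hr1 hθ hub m (Nat.lt_succ_iff.1 (mem_range.1 hk))
    _ ≤ Real.exp (-(m / θ * bennettH θ))
          * ∑ v : Fin n → Fin (n + 1), ∏ i, tiltWeight r θ n (v i) * r (v i) := by
        rw [← mul_sum, ← sum_biUnion hdisj]
        gcongr
        · exact fun v _ _ => htilt v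
        · exact subset_univ _
    _ = Real.exp (-(m / θ * bennettH θ)) := by rw [sum_prod_tiltWeight_mul hr1 hθ hub, mul_one]

end MaximalInequality

section CellLaw

open Finset

lemma measureReal_mem_eq_sum_prod {Ω ι κ : Type*} [MeasurableSpace Ω] {P : Measure Ω}
    [IsFiniteMeasure P] [Fintype ι] [Fintype κ] [MeasurableSpace κ] [MeasurableSingletonClass κ]
    {Y : ι → Ω → κ} (hY : ∀ i, Measurable (Y i)) (hind : iIndepFun Y P) (S : Finset (ι → κ)) :
    P.real {ω | (fun i => Y i ω) ∈ S} = ∑ v ∈ S, ∏ i, P.real (Y i ⁻¹' {v i}) := by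
  have hset : {ω | (fun i => Y i ω) ∈ S} = ⋃ v ∈ S, ⋂ i, Y i ⁻¹' {v i} := by
    ext ω
    simp only [Set.mem_ofPred_eq, Set.mem_iUnion, Set.mem_iInter, Set.mem_preimage,
      Set.mem_singleton_iff, exists_prop]
    exact ⟨fun h => ⟨_, h, fun _ => rfl⟩, fun ⟨v, hv, h⟩ => funext h ▸ hv⟩
  have hmeas : ∀ v : ι → κ, MeasurableSet (⋂ i, Y i ⁻¹' {v i}) :=
    fun v => MeasurableSet.iInter fun i => hY i (measurableSet_singleton _)
  rw [hset, measureReal_biUnion_finset _ fun v _ => hmeas v]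
  · refine sum_congr rfl fun v _ => ?_
    rw [measureReal_def, hind.meas_iInter fun i => ⟨{v i}, measurableSet_singleton _, rfl⟩,
      ENNReal.toReal_prod]
    rfl
  · refine fun v _ v' _ hne => Set.disjoint_left.2 fun ω hω hω' => hne (funext fun i => ?_)
    simp only [Set.mem_iInter, Set.mem_preimage, Set.mem_singleton_iff] at hω hω'
    rw [← hω i, ← hω' i]

variable {n : ℕ} {a β : ℝ}

/-- Cell `c < n` is the interval `(a + c / (nβ), a + (c + 1) / (nβ)]`; cell `n` collects the
rest of the line. -/
noncomputable def cellOf (n : ℕ) (a β y : ℝ) : Fin (n + 1) :=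
  if a < y then ⟨min n (⌈(y - a) * (n * β)⌉₊ - 1), Nat.lt_succ_of_le (min_le_left _ _)⟩
  else Fin.last n

lemma measurable_cellOf : Measurable (cellOf n a β) := by
  refine Measurable.ite measurableSet_Ioi ?_ measurable_const
  exact (measurable_from_nat (f := fun k : ℕ =>
    (⟨min n (k - 1), Nat.lt_succ_of_le (min_le_left _ _)⟩ : Fin (n + 1)))).comp
    (Nat.measurable_ceil.comp (by fun_prop))

lemma cellOf_lt_iff (hn : 0 < n) (hβ : 0 < β) {j : ℕ} (hj : j ≤ n) (y : ℝ) :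
    (cellOf n a β y : ℕ) < j ↔ y ∈ Ioc a (a + j / (n * β)) := by
  unfold cellOf
  split_ifs with hy
  · have hpos : 0 < (y - a) * (n * β) := mul_pos (sub_pos.2 hy) (by positivity)
    have hceil := Nat.ceil_pos.2 hpos
    rw [Fin.val_mk, show min n (⌈(y - a) * (n * β)⌉₊ - 1) < j ↔ ⌈(y - a) * (n * β)⌉₊ ≤ j by omega,
      Nat.ceil_le, Set.mem_Ioc, ← sub_le_iff_le_add', le_div_iff₀ (by positivity)]
    exact (and_iff_right hy).symm
  · simp only [Fin.val_last, Set.mem_Ioc, hy, false_and, iff_false, not_lt]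
    exact hj

lemma cellCount_cellOf (hn : 0 < n) (hβ : 0 < β) {k : ℕ} (hk : k ≤ n) (X : Fin n → ℝ) :
    cellCount k (fun i => cellOf n a β (X i)) = empCount X a (a + k / (n * β)) := by
  unfold cellCount empCount
  congr 1
  exact filter_congr fun i _ => cellOf_lt_iff hn hβ hk (X i)

lemma cumMass_cellOf (ν : Measure ℝ) [IsFiniteMeasure ν] (hn : 0 < n) (hβ : 0 < β) {j : ℕ}
    (hj : j ≤ n) :
    cumMass (fun c => ν.real (cellOf n a β ⁻¹' {c})) j = ν.real (Ioc a (a + j / (n * β))) := by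
  rw [cumMass, sum_measureReal_preimage_singleton _ fun c _ =>
    measurable_cellOf (measurableSet_singleton c)]
  congr 1
  ext y
  simp [cellOf_lt_iff hn hβ hj]

end CellLaw

open Finset in
/-- Discretised form of `P(sup_{s > x} F_n(a, s) / F(a, s) ≥ θ) ≤ exp(-n F(a, x) h(θ))`, with
`m = n β (x - a)` and the windows `(a, a + k / (nβ)]` of `F`-mass at most `k / (nθ)`. -/
theorem measure_exists_le_empCount_le {Ω : Type*} [MeasurableSpace Ω] {P : Measure Ω}
    [IsProbabilityMeasure P] {n : ℕ} (hn : 0 < n) {X : Fin n → Ω → ℝ} (hX : ∀ i, Measurable (X i))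
    (hind : iIndepFun X P) {ν : Measure ℝ} [IsProbabilityMeasure ν] (hlaw : ∀ i, P.map (X i) = ν)
    {a β θ : ℝ} (hβ : 0 < β) (hθ : 1 < θ)
    (hub : ∀ j ≤ n, ν (Ioc a (a + j / (n * β))) ≤ ENNReal.ofReal (j / (n * θ))) (m : ℝ) :
    P {ω | ∃ k : ℕ, m ≤ k ∧ k ≤ empCount (fun i => X i ω) a (a + k / (n * β))}
      ≤ ENNReal.ofReal (Real.exp (-(m / θ * bennettH θ))) := by
  classical
  set r : Fin (n + 1) → ℝ := fun c => ν.real (cellOf n a β ⁻¹' {c})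
  have hr1 : ∑ c, r c = 1 := by
    rw [sum_measureReal_preimage_singleton _ fun c _ =>
      measurable_cellOf (measurableSet_singleton c)]
    simp
  have hub' : ∀ j ≤ n, n * θ * cumMass r j ≤ j := fun j hj => by
    have h := ENNReal.toReal_le_of_le_ofReal (by positivity) (hub j hj)
    rw [← measureReal_def, ← cumMass_cellOf ν hn hβ hj, le_div_iff₀ (by positivity)] at h
    linarith
  set S := univ.filter fun v : Fin n → Fin (n + 1) => ∃ k : ℕ, m ≤ k ∧ k ≤ cellCount k v
  have hevent : {ω | ∃ k : ℕ, m ≤ k ∧ k ≤ empCount (fun i => X i ω) a (a + k / (n * β))}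
      = {ω | (fun i => cellOf n a β (X i ω)) ∈ S} := by
    ext ω
    simp only [Set.mem_ofPred_eq, S, mem_filter, Finset.mem_univ, true_and]
    refine exists_congr fun k => and_congr_right fun _ => ?_
    by_cases hk : k ≤ n
    · rw [cellCount_cellOf hn hβ hk]
    · have hle : empCount (fun i => X i ω) a (a + k / (n * β)) ≤ n :=
        (card_filter_le _ _).trans (card_fin n).le
      exact iff_of_false (by omega) (by have := cellCount_le k fun i => cellOf n a β (X i ω); omega)
  have hcell : ∀ i c, P.real (X i ⁻¹' (cellOf n a β ⁻¹' {c})) = r c := fun i c => by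
    rw [measureReal_def, ← Measure.map_apply (hX i) (measurable_cellOf (measurableSet_singleton c)),
      hlaw i]
    rfl
  have hprod := measureReal_mem_eq_sum_prod (Y := fun i => cellOf n a β ∘ X i)
    (fun i => measurable_cellOf.comp (hX i)) (hind.comp _ fun _ => measurable_cellOf) S
  rw [hevent, ← ofReal_measureReal]
  refine ENNReal.ofReal_le_ofReal (le_of_eq_of_le (hprod.trans ?_)
    (sum_prod_le_of_forall_exists_crossing (S := S) (fun c => measureReal_nonneg) hr1 hθ hub'
      fun v hv => (mem_filter.1 hv).2))
  exact sum_congr rfl fun v _ => prod_congr rfl fun i _ => hcell i (v i)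

lemma exists_one_lt_le_div_mul_bennettH {m : ℝ} (hm : 0 < m) (R : ℝ) :
    ∃ θ, 1 < θ ∧ R ≤ m / θ * bennettH θ := by
  set θ := Real.exp (1 + max R 0 / m)
  have hθ : 1 < θ := Real.one_lt_exp_iff.2 (by positivity)
  refine ⟨θ, hθ, ?_⟩
  rw [div_mul_bennettH (by positivity), Real.log_exp, mul_add, mul_div_cancel₀ _ hm.ne']
  have : 0 ≤ m * θ⁻¹ := by positivity
  linarith [le_max_left R 0]

lemma div_mul_div_two_le_div_mul_bennettH {n : ℕ} {f t0 t k0 d : ℝ} (hf : 0 < f) (ht0 : 0 < t0)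
    (ht : t0 ≤ t) (hk0 : 0 < k0) (hnk : (k0 / 3) ^ 2 ≤ n) (hd : 0 ≤ d) :
    t0 / (f + t0 / k0) * (t * d) / 2
      ≤ n * (f + t / √n) * d / ((f + t / √n) / f) * bennettH ((f + t / √n) / f) := by
  have hks : k0 / 3 ≤ √n := Real.le_sqrt_of_sq_le hnk
  have hs : 0 < √n := by linarith
  have hsn : √n ^ 2 = n := Real.sq_sqrt (Nat.cast_nonneg n)
  have ht' : 0 < t := ht0.trans_le ht
  set l := t / (√n * f)
  have hθ : (f + t / √n) / f = 1 + l := by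
    simp only [l]
    field_simp
  have hm : n * (f + t / √n) * d / (1 + l) = n * f * d := by
    rw [← hθ]
    field_simp
  rw [hθ, hm]
  calc t0 / (f + t0 / k0) * (t * d) / 2 ≤ t / (f + t / k0) * (t * d) / 2 := by
        gcongr ?_ * _ / _
        rw [div_le_div_iff₀ (by positivity) (by positivity)]
        have key : t * (f + t0 / k0) - t0 * (f + t / k0) = (t - t0) * f := by ring
        linarith [mul_nonneg (sub_nonneg.2 ht) hf.le]
    _ ≤ t / (f + t / (3 * √n)) * (t * d) / 2 := by
        gcongr
        linarith
    _ = n * f * d * (l ^ 2 / (2 * (1 + l / 3))) := by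
        simp only [l]
        generalize √(n : ℝ) = s at hs hsn ⊢
        rw [← hsn]
        field_simp
    _ ≤ n * f * d * bennettH (1 + l) := by
        gcongr
        exact sq_div_le_bennettH_one_add (by positivity)

/-- The tilt `θ = β / f` with `β = f + t / √n`; when `f = 0` any large enough `θ` will do. -/
lemma exists_tilt {n : ℕ} {f t0 t k0 d : ℝ} (hf : 0 ≤ f) (ht0 : 0 < t0) (ht : t0 ≤ t)
    (hk0 : 0 < k0) (hnk : (k0 / 3) ^ 2 ≤ n) (hd : 0 < d) :
    ∃ θ, 1 < θ ∧ (∀ j : ℕ, f * (j / (n * (f + t / √n))) ≤ j / (n * θ))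
      ∧ t0 / (f + t0 / k0) * (t * d) / 2 ≤ n * (f + t / √n) * d / θ * bennettH θ := by
  have hn : (0 : ℝ) < n := lt_of_lt_of_le (by positivity) hnk
  have hβ : 0 < t / √n := div_pos (ht0.trans_le ht) (Real.sqrt_pos.2 hn)
  rcases hf.eq_or_lt with rfl | hf
  · obtain ⟨θ, hθ, hR⟩ := exists_one_lt_le_div_mul_bennettH (m := n * (0 + t / √n) * d)
      (by positivity) (t0 / (0 + t0 / k0) * (t * d) / 2)
    exact ⟨θ, hθ, fun j => by rw [zero_mul]; positivity, hR⟩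
  · refine ⟨(f + t / √n) / f, (one_lt_div hf).2 (lt_add_of_pos_right _ hβ), fun j => le_of_eq ?_,
      div_mul_div_two_le_div_mul_bennettH hf ht0 ht hk0 hnk hd.le⟩
    field_simp

lemma withDensity_Ioc_le {f : ℝ → ℝ} {a s C : ℝ} (hC : 0 ≤ C) (hf : ∀ y ∈ Ioc a s, f y ≤ C) :
    volume.withDensity (fun y => ENNReal.ofReal (f y)) (Ioc a s)
      ≤ ENNReal.ofReal (C * (s - a)) := by
  rw [withDensity_apply _ measurableSet_Ioc]
  calc ∫⁻ y in Ioc a s, ENNReal.ofReal (f y) ≤ ∫⁻ _ in Ioc a s, ENNReal.ofReal C :=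
        setLIntegral_mono measurable_const fun y hy => ENNReal.ofReal_le_ofReal (hf y hy)
    _ = ENNReal.ofReal (C * (s - a)) := by
        rw [setLIntegral_const, Real.volume_Ioc, ← ENNReal.ofReal_mul hC]

lemma apply_le_of_flat {f : ℝ → ℝ} {a b y : ℝ} (hdec : AntitoneOn f (Icc 0 1))
    (hsupp : ∀ y, y ∉ Icc (0 : ℝ) 1 → f y = 0) (hfb : 0 ≤ f b) (ha : 0 ≤ a) (hab : a < b)
    (hb : b ≤ 1) (hflat : ∀ y ∈ Ioc a b, f y = f b) (hy : a < y) : f y ≤ f b := by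
  rcases le_or_gt y b with hyb | hby
  · exact (hflat y ⟨hy, hyb⟩).le
  rcases le_or_gt y 1 with hy1 | hy1
  · exact hdec ⟨ha.trans hab.le, hb⟩ ⟨ha.trans (hab.trans hby).le, hy1⟩ hby.le
  · rw [hsupp y fun h => hy1.not_ge h.2]
    exact hfb

/-- upper-tail exponential bound for the Grenander estimator on a flat part. -/
theorem grenander_flat_upper_tail_bound
    {Ω : Type*} [MeasurableSpace Ω] (P : Measure Ω) [IsProbabilityMeasure P]
    (n : ℕ) (hn : 0 < n)
    (f0 : ℝ → ℝ) (hdec : AntitoneOn f0 (Icc 0 1)) (hnn : ∀ y, 0 ≤ f0 y)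
    (hsupp : ∀ y, y ∉ Icc (0:ℝ) 1 → f0 y = 0)
    (a b x : ℝ) (ha : 0 ≤ a) (hab : a < b) (hb : b ≤ 1) (hx : x ∈ Ioo a b)
    (hflat : ∀ y ∈ Ioc a b, f0 y = f0 b)
    (X : Fin n → Ω → ℝ) (hmeas : ∀ i, Measurable (X i))
    (hiid : iIndepFun X P)
    (hlaw : ∀ i, Measure.map (X i) P =
      MeasureTheory.volume.withDensity (fun y => ENNReal.ofReal (f0 y)))
    (t0 k0 c0 : ℝ) (ht0 : 0 < t0) (hk0 : 0 < k0)
    (hc0 : c0 = t0 / (f0 b + t0 / k0))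
    (hnk : (k0 / 3) ^ 2 ≤ (n : ℝ)) :
    ∀ t : ℝ, t0 ≤ t →
      P {ω | f0 x + t / Real.sqrt n < grenEst (empCDF n (fun i => X i ω)) x} ≤
        ENNReal.ofReal (Real.exp (-(c0 * (t * (x - a))) / 2)) := by
  intro t ht
  set β := f0 b + t / √n
  have hβ : 0 < β := add_pos_of_nonneg_of_pos (hnn b)
    (div_pos (ht0.trans_le ht) (Real.sqrt_pos.2 (Nat.cast_pos.2 hn)))
  set ν := volume.withDensity fun y => ENNReal.ofReal (f0 y)
  have : IsProbabilityMeasure ν :=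
    hlaw ⟨0, hn⟩ ▸ Measure.isProbabilityMeasure_map (hmeas _).aemeasurable
  have hevent : {ω | f0 x + t / √n < grenEst (empCDF n fun i => X i ω) x}
      ⊆ {ω | ∃ k : ℕ, n * β * (x - a) ≤ k ∧ k ≤ empCount (fun i => X i ω) a (a + k / (n * β))} :=
    fun ω hω => exists_le_empCount_of_lt_grenEst _ hn ha hx.1 hβ
      (by rwa [hflat x ⟨hx.1, hx.2.le⟩] at hω)
  obtain ⟨θ, hθ, hwindow, hrate⟩ := exists_tilt (hnn b) ht0 ht hk0 hnk (sub_pos.2 hx.1)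
  have hub : ∀ j ≤ n, ν (Ioc a (a + j / (n * β))) ≤ ENNReal.ofReal (j / (n * θ)) := fun j _ => by
    refine (withDensity_Ioc_le (hnn b) fun y hy =>
      apply_le_of_flat hdec hsupp (hnn b) ha hab hb hflat hy.1).trans ?_
    rw [add_sub_cancel_left]
    exact ENNReal.ofReal_le_ofReal (hwindow j)
  calc _ ≤ _ := measure_mono hevent
    _ ≤ _ := measure_exists_le_empCount_le hn hmeas hiid hlaw hβ hθ hub _
    _ ≤ _ := ENNReal.ofReal_le_ofReal (Real.exp_le_exp.2 (by rw [hc0]; linarith))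
end
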